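/- arXiv:2301.10816 — 3 statements merged into one kernel-verified Lean document; each statement's English description precedes it below -/
import Mathlib

section
/- Let S⁰ ∈ ℝ^{n×m}, ε ≥ 0, and B_ε(S⁰) the Frobenius ball of radius ε around S⁰. Let 𝒜 be any set of 0-1 assignment matrices in which every matrix has exactly K ones. Then A maximizes inf_{S ∈ B_ε(S⁰)} USW(A, S) over 𝒜 if and only if A maximizes USW(A, S⁰) over 𝒜. -/
/-- Utilitarian social welfare: `USW(A,S) = (1/n) Σ_{p,r} A_{p,r} S_{p,r}`. -/
noncomputable def USW (n m : ℕ) (A S : Matrix (Fin n) (Fin m) ℝ) : ℝ :=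
  (1 / (n : ℝ)) * ∑ p, ∑ r, A p r * S p r

/-- Frobenius norm of a matrix. -/
noncomputable def frobNorm (n m : ℕ) (X : Matrix (Fin n) (Fin m) ℝ) : ℝ :=
  Real.sqrt (∑ p, ∑ r, (X p r) ^ 2)

/-!
Flattening a matrix into `EuclideanSpace ℝ (Fin n × Fin m)` turns the Frobenius ball into a
Euclidean ball and `USW n m A` into the linear functional `⟪A / n, ·⟫`. By Cauchy–Schwarz such a
functional `⟪a, ·⟫` attains its minimum `⟪a, s₀⟫ - ε ‖a‖` over `closedBall s₀ ε` at
`s₀ - (ε / ‖a‖) • a`. A 0-1 matrix with `K` ones has Frobenius norm `√K`, so the adversarial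
penalty `ε √K / n` is the same for every matrix of `𝒜` and does not change the maximisers.
-/

open RealInnerProductSpace Metric

section InnerProductSpace

variable {E : Type*} [NormedAddCommGroup E] [InnerProductSpace ℝ E]

theorem isLeast_inner_image_closedBall (a s₀ : E) {ε : ℝ} (hε : 0 ≤ ε) :
    IsLeast ((fun x => ⟪a, x⟫) '' closedBall s₀ ε) (⟪a, s₀⟫ - ε * ‖a‖) := by
  -- for `a = 0` the witness is `s₀`, since `‖0‖⁻¹ = 0`
  refine ⟨⟨s₀ - (ε * ‖a‖⁻¹) • a, ?_, ?_⟩, ?_⟩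
  · rw [mem_closedBall, dist_eq_norm, sub_sub_cancel_left, norm_neg, norm_smul,
      Real.norm_of_nonneg (by positivity), mul_assoc]
    exact mul_le_of_le_one_right hε (inv_mul_le_one_of_le₀ le_rfl (norm_nonneg a))
  · rcases eq_or_ne a 0 with rfl | ha
    · simp
    · simp only [inner_sub_right, real_inner_smul_right, real_inner_self_eq_norm_sq]
      field_simp
  · rintro _ ⟨x, hx, rfl⟩
    have hdist : ‖x - s₀‖ ≤ ε := by rwa [← dist_eq_norm, ← mem_closedBall]
    have hcs : -(‖a‖ * ‖x - s₀‖) ≤ ⟪a, x - s₀⟫ := neg_le_of_abs_le (abs_real_inner_le_norm a _)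
    rw [inner_sub_right] at hcs
    nlinarith [mul_le_mul_of_nonneg_left hdist (norm_nonneg a)]

theorem sInf_inner_image_closedBall (a s₀ : E) {ε : ℝ} (hε : 0 ≤ ε) :
    sInf ((fun x => ⟪a, x⟫) '' closedBall s₀ ε) = ⟪a, s₀⟫ - ε * ‖a‖ :=
  (isLeast_inner_image_closedBall a s₀ hε).csInf_eq

end InnerProductSpace

def Matrix.toEuclidean {ι κ : Type*} [Fintype ι] [Fintype κ] :
    Matrix ι κ ℝ ≃ₗ[ℝ] EuclideanSpace ℝ (ι × κ) :=
  (LinearEquiv.curry ℝ ℝ ι κ).symm.trans (WithLp.linearEquiv 2 ℝ _).symm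

@[simp]
theorem Matrix.toEuclidean_apply {ι κ : Type*} [Fintype ι] [Fintype κ] (X : Matrix ι κ ℝ)
    (i : ι × κ) : X.toEuclidean i = X i.1 i.2 := rfl

section Frobenius

variable {n m : ℕ}

theorem frobNorm_eq_norm_toEuclidean (X : Matrix (Fin n) (Fin m) ℝ) :
    frobNorm n m X = ‖X.toEuclidean‖ := by
  simp [frobNorm, EuclideanSpace.norm_eq, Fintype.sum_prod_type]

theorem USW_eq_inner (A S : Matrix (Fin n) (Fin m) ℝ) :
    USW n m A S = ⟪(1 / (n : ℝ)) • A.toEuclidean, S.toEuclidean⟫ := by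
  rw [real_inner_smul_left, PiLp.inner_apply, Fintype.sum_prod_type, USW]
  simp [mul_comm]

theorem sInf_USW_image_frobBall (A S₀ : Matrix (Fin n) (Fin m) ℝ) {ε : ℝ} (hε : 0 ≤ ε) :
    sInf ((fun S => USW n m A S) '' {X | frobNorm n m (X - S₀) ≤ ε}) =
      USW n m A S₀ - ε * (frobNorm n m A / n) := by
  have hball : {X | frobNorm n m (X - S₀) ≤ ε} =
      Matrix.toEuclidean ⁻¹' closedBall S₀.toEuclidean ε := by
    ext X
    simp [frobNorm_eq_norm_toEuclidean, dist_eq_norm]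
  have hUSW : (fun S => USW n m A S) =
      (fun x => ⟪(1 / (n : ℝ)) • A.toEuclidean, x⟫) ∘ Matrix.toEuclidean := by
    funext S
    exact USW_eq_inner A S
  rw [hball, hUSW, Set.image_comp, Set.image_preimage_eq _ Matrix.toEuclidean.surjective,
    sInf_inner_image_closedBall _ _ hε, USW_eq_inner, norm_smul, frobNorm_eq_norm_toEuclidean]
  simp [div_eq_inv_mul]

theorem frobNorm_eq_sqrt_of_zero_one {K : ℕ} {A : Matrix (Fin n) (Fin m) ℝ}
    (h01 : ∀ p r, A p r = 0 ∨ A p r = 1) (hK : ∑ p, ∑ r, A p r = (K : ℝ)) :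
    frobNorm n m A = √K := by
  rw [frobNorm, ← hK]
  congr 1
  refine Finset.sum_congr rfl fun p _ => Finset.sum_congr rfl fun r _ => ?_
  rcases h01 p r with h | h <;> simp [h]

end Frobenius

theorem stmt4 (n m K : ℕ) (S0 : Matrix (Fin n) (Fin m) ℝ) (ε : ℝ) (hε : 0 ≤ ε)
    (𝒜 : Set (Matrix (Fin n) (Fin m) ℝ))
    (h𝒜01 : ∀ A ∈ 𝒜, ∀ p r, A p r = 0 ∨ A p r = 1)
    (h𝒜K : ∀ A ∈ 𝒜, ∑ p, ∑ r, A p r = (K : ℝ))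
    (A : Matrix (Fin n) (Fin m) ℝ) (hA : A ∈ 𝒜) :
    ((∀ B ∈ 𝒜,
        sInf ((fun S => USW n m B S) '' {X | frobNorm n m (X - S0) ≤ ε}) ≤
          sInf ((fun S => USW n m A S) '' {X | frobNorm n m (X - S0) ≤ ε})) ↔
      (∀ B ∈ 𝒜, USW n m B S0 ≤ USW n m A S0)) := by
  have robust_eq : ∀ B ∈ 𝒜, sInf ((fun S => USW n m B S) '' {X | frobNorm n m (X - S0) ≤ ε}) =
      USW n m B S0 - ε * (√K / n) := fun B hB => by
    rw [sInf_USW_image_frobBall B S0 hε, frobNorm_eq_sqrt_of_zero_one (h𝒜01 B hB) (h𝒜K B hB)]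
  refine forall₂_congr fun B hB => ?_
  rw [robust_eq B hB, robust_eq A hA, sub_le_sub_iff_right]
end

section
/- Let 𝒮 ⊆ ℝ^{n×m} be nonempty with L1 diameter at most L, and suppose there exists S_γ ∈ 𝒮 with ‖S_γ − S*‖₁ ≤ γ, where S* is the true score matrix. Let 𝒜 be a finite nonempty set of 0-1 assignment matrices, A* = argmax_{A∈𝒜} USW(A, S*), and let A^ε ∈ 𝒜 satisfy max_{A∈𝒜} inf_{S∈𝒮} USW(A,S) − inf_{S∈𝒮} USW(A^ε, S) ≤ ε. Then USW(A*, S*) − USW(A^ε, S*) ≤ ε + (2γ + L)/n. -/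
/-- Entrywise L1 norm of a matrix. -/
noncomputable def l1Norm (n m : ℕ) (X : Matrix (Fin n) (Fin m) ℝ) : ℝ :=
  ∑ p, ∑ r, |X p r|

section Welfare

variable {n m : ℕ} {A : Matrix (Fin n) (Fin m) ℝ}

theorem USW_sub_USW (A S S' : Matrix (Fin n) (Fin m) ℝ) :
    USW n m A S - USW n m A S' = USW n m A (S - S') := by
  simp only [USW, ← mul_sub, ← Finset.sum_sub_distrib, Matrix.sub_apply]

theorem abs_USW_le (hA : ∀ p r, |A p r| ≤ 1) (X : Matrix (Fin n) (Fin m) ℝ) :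
    |USW n m A X| ≤ l1Norm n m X / n := by
  have hsum : |∑ p, ∑ r, A p r * X p r| ≤ ∑ p, ∑ r, |X p r| := by
    refine (Finset.abs_sum_le_sum_abs _ _).trans (Finset.sum_le_sum fun p _ => ?_)
    refine (Finset.abs_sum_le_sum_abs _ _).trans (Finset.sum_le_sum fun r _ => ?_)
    rw [abs_mul]
    exact mul_le_of_le_one_left (abs_nonneg _) (hA p r)
  rw [USW, l1Norm, abs_mul, abs_of_nonneg (by positivity), one_div_mul_eq_div]
  exact div_le_div_of_nonneg_right hsum n.cast_nonneg

theorem abs_USW_sub_USW_le (hA : ∀ p r, |A p r| ≤ 1) (S S' : Matrix (Fin n) (Fin m) ℝ) :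
    |USW n m A S - USW n m A S'| ≤ l1Norm n m (S - S') / n :=
  USW_sub_USW A S S' ▸ abs_USW_le hA (S - S')

variable {𝒮 : Set (Matrix (Fin n) (Fin m) ℝ)} {S₀ : Matrix (Fin n) (Fin m) ℝ} {L : ℝ}
  (hA : ∀ p r, |A p r| ≤ 1) (hL : ∀ S ∈ 𝒮, l1Norm n m (S₀ - S) ≤ L)
include hA hL

theorem USW_sub_le_USW_of_mem {S : Matrix (Fin n) (Fin m) ℝ} (hS : S ∈ 𝒮) :
    USW n m A S₀ - L / n ≤ USW n m A S := by
  have hdist := (le_abs_self _).trans (abs_USW_sub_USW_le hA S₀ S)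
  have hLn := div_le_div_of_nonneg_right (hL S hS) (n.cast_nonneg (α := ℝ))
  linarith

theorem USW_le_sInf_add (hS₀ : S₀ ∈ 𝒮) :
    USW n m A S₀ ≤ sInf (USW n m A '' 𝒮) + L / n := by
  have : USW n m A S₀ - L / n ≤ sInf (USW n m A '' 𝒮) :=
    le_csInf ⟨_, Set.mem_image_of_mem _ hS₀⟩
      (Set.forall_mem_image.2 fun _ hS => USW_sub_le_USW_of_mem hA hL hS)
  linarith

theorem sInf_le_USW (hS₀ : S₀ ∈ 𝒮) : sInf (USW n m A '' 𝒮) ≤ USW n m A S₀ :=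
  csInf_le ⟨_, Set.forall_mem_image.2 fun _ hS => USW_sub_le_USW_of_mem hA hL hS⟩
    (Set.mem_image_of_mem _ hS₀)

end Welfare

theorem stmt11_general (n m : ℕ) (𝒮 : Set (Matrix (Fin n) (Fin m) ℝ))
    (L γ ε : ℝ)
    (hdiam : ∀ S ∈ 𝒮, ∀ S' ∈ 𝒮, l1Norm n m (S - S') ≤ L)
    (Sstar : Matrix (Fin n) (Fin m) ℝ)
    (hγ : ∃ Sγ ∈ 𝒮, l1Norm n m (Sγ - Sstar) ≤ γ)
    (𝒜 : Set (Matrix (Fin n) (Fin m) ℝ))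
    (h𝒜01 : ∀ A ∈ 𝒜, ∀ p r, A p r = 0 ∨ A p r = 1)
    (Astar : Matrix (Fin n) (Fin m) ℝ) (hAstar : Astar ∈ 𝒜)
    (Aeps : Matrix (Fin n) (Fin m) ℝ) (hAeps : Aeps ∈ 𝒜)
    (heps : sSup ((fun A => sInf ((fun S => USW n m A S) '' 𝒮)) '' 𝒜) -
        sInf ((fun S => USW n m Aeps S) '' 𝒮) ≤ ε) :
    USW n m Astar Sstar - USW n m Aeps Sstar ≤ ε + (2 * γ + L) / n := by
  obtain ⟨Sγ, hSγ, hγ⟩ := hγ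
  have hA : ∀ A ∈ 𝒜, ∀ p r, |A p r| ≤ 1 := fun A hA p r => by
    rcases h𝒜01 A hA p r with h | h <;> simp [h]
  have hγn := div_le_div_of_nonneg_right hγ (n.cast_nonneg (α := ℝ))
  set f := fun A => sInf ((fun S => USW n m A S) '' 𝒮)
  have hf_bdd : BddAbove (f '' 𝒜) := ⟨l1Norm n m Sγ / n, Set.forall_mem_image.2 fun A hA𝒜 =>
    (sInf_le_USW (hA A hA𝒜) (hdiam Sγ hSγ) hSγ).trans
      ((le_abs_self _).trans (abs_USW_le (hA A hA𝒜) Sγ))⟩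
  have h_star_γ := abs_sub_le_iff.1 ((abs_USW_sub_USW_le (hA _ hAstar) Sγ Sstar).trans hγn)
  have h_eps_γ := abs_sub_le_iff.1 ((abs_USW_sub_USW_le (hA _ hAeps) Sγ Sstar).trans hγn)
  have h_robust : USW n m Astar Sγ ≤ f Astar + L / n :=
    USW_le_sInf_add (hA _ hAstar) (hdiam Sγ hSγ) hSγ
  have h_max : f Astar ≤ sSup (f '' 𝒜) := le_csSup hf_bdd (Set.mem_image_of_mem f hAstar)
  have h_eps : f Aeps ≤ USW n m Aeps Sγ := sInf_le_USW (hA _ hAeps) (hdiam Sγ hSγ) hSγ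
  rw [add_div, mul_div_assoc, two_mul]
  linarith [h_star_γ.2, h_eps_γ.1]

theorem stmt11 (n m : ℕ) (𝒮 : Set (Matrix (Fin n) (Fin m) ℝ)) (h𝒮 : 𝒮.Nonempty)
    (L γ ε : ℝ)
    (hdiam : ∀ S ∈ 𝒮, ∀ S' ∈ 𝒮, l1Norm n m (S - S') ≤ L)
    (Sstar : Matrix (Fin n) (Fin m) ℝ)
    (hγ : ∃ Sγ ∈ 𝒮, l1Norm n m (Sγ - Sstar) ≤ γ)
    (𝒜 : Set (Matrix (Fin n) (Fin m) ℝ)) (h𝒜ne : 𝒜.Nonempty) (h𝒜fin : 𝒜.Finite)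
    (h𝒜01 : ∀ A ∈ 𝒜, ∀ p r, A p r = 0 ∨ A p r = 1)
    (Astar : Matrix (Fin n) (Fin m) ℝ) (hAstar : Astar ∈ 𝒜)
    (hopt : ∀ B ∈ 𝒜, USW n m B Sstar ≤ USW n m Astar Sstar)
    (Aeps : Matrix (Fin n) (Fin m) ℝ) (hAeps : Aeps ∈ 𝒜)
    (heps : sSup ((fun A => sInf ((fun S => USW n m A S) '' 𝒮)) '' 𝒜) -
        sInf ((fun S => USW n m Aeps S) '' 𝒮) ≤ ε) :
    USW n m Astar Sstar - USW n m Aeps Sstar ≤ ε + (2 * γ + L) / n :=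
  stmt11_general n m 𝒮 L γ ε hdiam Sstar hγ 𝒜 h𝒜01 Astar hAstar Aeps hAeps heps
end

section
/- Let 𝒮 be a nonempty subset of ℝ^{n×m} with L1 diameter at most L, containing a point S_γ with ‖S_γ − S*‖₁ ≤ γ. Let 𝒜̃ ⊆ [0,1]^{n×m} be nonempty, Ã^ε ∈ 𝒜̃ with sup_{A ∈ 𝒜̃} inf_{S∈𝒮} USW(A,S) − inf_{S∈𝒮} USW(Ã^ε,S) ≤ ε, and A' a random 0-1 matrix with E[A'] = Ã^ε. If A* ∈ 𝒜̃ maximizes USW(·, S*) over 𝒜̃, then USW(A*, S*) − E[USW(A', S*)] ≤ ε + (2γ + L)/n. -/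
/-!
Since `USW n m A` is linear in `S` with coefficients in `[0, 1]`, it is `1/n`-Lipschitz for the
entrywise L1 norm. Moving from `S*` to `Sγ` costs `γ/n` for both `A*` and `Aeps`, and
`USW A* Sγ` exceeds the infimum of `USW A*` over `𝒮` by at most `L/n`; that infimum is at most the
maximin value, which is within `ε` of the infimum for `Aeps`, itself at most `USW Aeps Sγ`.
By linearity of the integral, `E[USW A' S*] = USW Aeps S*`.
-/

open MeasureTheory

section
variable {n m : ℕ}

lemma l1Norm_sub_comm (X Y : Matrix (Fin n) (Fin m) ℝ) :
    l1Norm n m (X - Y) = l1Norm n m (Y - X) := by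
  simp only [l1Norm, Matrix.sub_apply, abs_sub_comm]

lemma USW_sub_USW_le {A : Matrix (Fin n) (Fin m) ℝ} (hA : ∀ p r, 0 ≤ A p r ∧ A p r ≤ 1)
    (S S' : Matrix (Fin n) (Fin m) ℝ) :
    USW n m A S - USW n m A S' ≤ l1Norm n m (S - S') / n := by
  have hentry : ∀ p r, A p r * S p r - A p r * S' p r ≤ |(S - S') p r| := fun p r => by
    rw [← mul_sub, Matrix.sub_apply]
    exact (mul_le_mul_of_nonneg_left (le_abs_self _) (hA p r).1).trans
      (mul_le_of_le_one_left (abs_nonneg _) (hA p r).2)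
  rw [USW, USW, l1Norm, ← mul_sub, one_div_mul_eq_div]
  gcongr
  simp only [← Finset.sum_sub_distrib]
  exact Finset.sum_le_sum fun p _ => Finset.sum_le_sum fun r _ => hentry p r

lemma sub_div_le_sInf_USW {A : Matrix (Fin n) (Fin m) ℝ} (hA : ∀ p r, 0 ≤ A p r ∧ A p r ≤ 1)
    {𝒮 : Set (Matrix (Fin n) (Fin m) ℝ)} (h𝒮 : 𝒮.Nonempty) {L : ℝ}
    (hdiam : ∀ S ∈ 𝒮, ∀ S' ∈ 𝒮, l1Norm n m (S - S') ≤ L) {S₀ : Matrix (Fin n) (Fin m) ℝ}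
    (hS₀ : S₀ ∈ 𝒮) :
    USW n m A S₀ - L / n ≤ sInf ((fun S => USW n m A S) '' 𝒮) := by
  refine le_csInf (h𝒮.image _) ?_
  rintro _ ⟨S, hS, rfl⟩
  have := (USW_sub_USW_le hA S₀ S).trans
    (div_le_div_of_nonneg_right (hdiam S₀ hS₀ S hS) n.cast_nonneg)
  simp only
  linarith

lemma integral_USW {Ω : Type*} [MeasurableSpace Ω] {μ : Measure Ω}
    {A' : Ω → Matrix (Fin n) (Fin m) ℝ} (hint : ∀ p r, Integrable (fun ω => A' ω p r) μ)
    (S : Matrix (Fin n) (Fin m) ℝ) :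
    ∫ ω, USW n m (A' ω) S ∂μ = USW n m (fun p r => ∫ ω, A' ω p r ∂μ) S := by
  have hterm : ∀ p r, Integrable (fun ω => A' ω p r * S p r) μ := fun p r =>
    (hint p r).mul_const _
  simp only [USW, integral_const_mul]
  rw [integral_finsetSum _ fun p _ => integrable_finsetSum _ fun r _ => hterm p r]
  simp only [integral_finsetSum _ fun r _ => hterm _ r, integral_mul_const]

end

theorem stmt17_general (n m : ℕ)
    {Ω : Type*} [MeasurableSpace Ω] (μ : Measure Ω)
    (𝒮 : Set (Matrix (Fin n) (Fin m) ℝ)) (h𝒮 : 𝒮.Nonempty)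
    (L γ ε : ℝ)
    (hdiam : ∀ S ∈ 𝒮, ∀ S' ∈ 𝒮, l1Norm n m (S - S') ≤ L)
    (Sstar : Matrix (Fin n) (Fin m) ℝ)
    (hγ : ∃ Sγ ∈ 𝒮, l1Norm n m (Sγ - Sstar) ≤ γ)
    (𝒜t : Set (Matrix (Fin n) (Fin m) ℝ))
    (h𝒜frac : ∀ A ∈ 𝒜t, ∀ p r, 0 ≤ A p r ∧ A p r ≤ 1)
    (hbddA : BddAbove ((fun A => sInf ((fun S => USW n m A S) '' 𝒮)) '' 𝒜t))
    (hbddS : ∀ A : Matrix (Fin n) (Fin m) ℝ, BddBelow ((fun S => USW n m A S) '' 𝒮))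
    (Aeps : Matrix (Fin n) (Fin m) ℝ) (hAeps : Aeps ∈ 𝒜t)
    (heps : sSup ((fun A => sInf ((fun S => USW n m A S) '' 𝒮)) '' 𝒜t) -
        sInf ((fun S => USW n m Aeps S) '' 𝒮) ≤ ε)
    (A' : Ω → Matrix (Fin n) (Fin m) ℝ)
    (hA'int : ∀ p r, Integrable (fun ω => A' ω p r) μ)
    (hA'mean : ∀ p r, ∫ ω, A' ω p r ∂μ = Aeps p r)
    (Astar : Matrix (Fin n) (Fin m) ℝ) (hAstar : Astar ∈ 𝒜t) :
    USW n m Astar Sstar - ∫ ω, USW n m (A' ω) Sstar ∂μ ≤ ε + (2 * γ + L) / n := by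
  obtain ⟨Sγ, hSγ, hSγγ⟩ := hγ
  have hmean : ∫ ω, USW n m (A' ω) Sstar ∂μ = USW n m Aeps Sstar := by
    rw [integral_USW hA'int]
    simp only [hA'mean]
  have hAstar_shift : USW n m Astar Sstar - USW n m Astar Sγ ≤ γ / n := by
    have := USW_sub_USW_le (h𝒜frac Astar hAstar) Sstar Sγ
    rw [l1Norm_sub_comm] at this
    exact this.trans (by gcongr)
  have hAeps_shift : USW n m Aeps Sγ - USW n m Aeps Sstar ≤ γ / n :=
    (USW_sub_USW_le (h𝒜frac Aeps hAeps) Sγ Sstar).trans (by gcongr)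
  have hAstar_inf := sub_div_le_sInf_USW (h𝒜frac Astar hAstar) h𝒮 hdiam hSγ
  have hAstar_le_sup := le_csSup hbddA ⟨Astar, hAstar, rfl⟩
  have hAeps_inf := csInf_le (hbddS Aeps) ⟨Sγ, hSγ, rfl⟩
  have hsplit : (2 * γ + L) / n = γ / n + γ / n + L / n := by ring
  rw [hmean, hsplit]
  linarith

theorem stmt17 (n m : ℕ)
    {Ω : Type*} [MeasurableSpace Ω] (μ : Measure Ω) [IsProbabilityMeasure μ]
    (𝒮 : Set (Matrix (Fin n) (Fin m) ℝ)) (h𝒮 : 𝒮.Nonempty)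
    (L γ ε : ℝ)
    (hdiam : ∀ S ∈ 𝒮, ∀ S' ∈ 𝒮, l1Norm n m (S - S') ≤ L)
    (Sstar : Matrix (Fin n) (Fin m) ℝ)
    (hγ : ∃ Sγ ∈ 𝒮, l1Norm n m (Sγ - Sstar) ≤ γ)
    (𝒜t : Set (Matrix (Fin n) (Fin m) ℝ)) (h𝒜ne : 𝒜t.Nonempty)
    (h𝒜frac : ∀ A ∈ 𝒜t, ∀ p r, 0 ≤ A p r ∧ A p r ≤ 1)
    (hbddA : BddAbove ((fun A => sInf ((fun S => USW n m A S) '' 𝒮)) '' 𝒜t))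
    (hbddS : ∀ A : Matrix (Fin n) (Fin m) ℝ, BddBelow ((fun S => USW n m A S) '' 𝒮))
    (Aeps : Matrix (Fin n) (Fin m) ℝ) (hAeps : Aeps ∈ 𝒜t)
    (heps : sSup ((fun A => sInf ((fun S => USW n m A S) '' 𝒮)) '' 𝒜t) -
        sInf ((fun S => USW n m Aeps S) '' 𝒮) ≤ ε)
    (A' : Ω → Matrix (Fin n) (Fin m) ℝ)
    (hA'int : ∀ p r, Integrable (fun ω => A' ω p r) μ)
    (hA'mean : ∀ p r, ∫ ω, A' ω p r ∂μ = Aeps p r)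
    (Astar : Matrix (Fin n) (Fin m) ℝ) (hAstar : Astar ∈ 𝒜t)
    (hopt : ∀ B ∈ 𝒜t, USW n m B Sstar ≤ USW n m Astar Sstar) :
    USW n m Astar Sstar - ∫ ω, USW n m (A' ω) Sstar ∂μ ≤ ε + (2 * γ + L) / n :=
  stmt17_general n m μ 𝒮 h𝒮 L γ ε hdiam Sstar hγ 𝒜t h𝒜frac hbddA hbddS Aeps hAeps heps A' hA'int
    hA'mean Astar hAstar
end
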